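/- Let X_1,...,X_n be Bernoulli random variables with P(X_i = 1) = p_i, and let X̃_1,...,X̃_n be mutually independent Bernoulli random variables with P(X̃_i = 1) = p_i. Set Z = Σ_{i=1}^n X_i, Z̃ = Σ_{i=1}^n X̃_i, S = Σ_{i=1}^n p_i, B = S + S², η_{ij} = max(E[X_i X_j] − p_i p_j, 0) for i ≠ j, η_{ii} = 0, and H = Σ_{i,j∈[n]} η_{ij}. Then P(Z > 0) ≥ (1/2) · (1 − H/(B + H)) · P(Z̃ > 0). -/

import Mathlib

open MeasureTheory ProbabilityTheory

lemma bdd_integrable {Ω : Type*} [MeasureSpace Ω] [IsFiniteMeasure (ℙ : Measure Ω)]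
    {f : Ω → ℝ} (hf : Measurable f) {C : ℝ} (h : ∀ ω, |f ω| ≤ C) :
    Integrable f ℙ :=
  (integrable_const C).mono' hf.aestronglyMeasurable (Filter.Eventually.of_forall h)

lemma expand_sq {Ω : Type*} {m : MeasurableSpace Ω} (μ : Measure Ω) [IsFiniteMeasure μ]
    {f : Ω → ℝ} (hf : Integrable f μ) (hf2 : Integrable (fun ω => f ω ^ 2) μ) (a : ℝ) :
    ∫ ω, (f ω - a) ^ 2 ∂μ
      = (∫ ω, f ω ^ 2 ∂μ) - 2 * a * (∫ ω, f ω ∂μ) + a ^ 2 * (μ Set.univ).toReal := by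
  have expand : (fun ω => (f ω - a) ^ 2)
      = fun ω => (f ω ^ 2 - 2 * a * f ω) + a ^ 2 := by
    funext ω; ring
  have h1 : Integrable (fun ω => f ω ^ 2 - 2 * a * f ω) μ := hf2.sub (hf.const_mul _)
  have h2 : Integrable (fun ω => 2 * a * f ω) μ := hf.const_mul _
  rw [expand, integral_add h1 (integrable_const _), integral_sub hf2 h2,
    integral_const_mul, integral_const, smul_eq_mul, measureReal_def]
  ring

lemma my_cs {Ω : Type*} [MeasureSpace Ω] [IsProbabilityMeasure (ℙ : Measure Ω)]
    {f : Ω → ℝ} (hf : Measurable f) {C : ℝ} (hbd : ∀ ω, |f ω| ≤ C)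
    {s : Set Ω} (hzero : ∀ ω ∉ s, f ω = 0) :
    (∫ ω, f ω) ^ 2 ≤ (∫ ω, f ω ^ 2) * (ℙ s).toReal := by
  have hint : Integrable f ℙ := bdd_integrable hf hbd
  have hint2 : Integrable (fun ω => f ω ^ 2) ℙ := by
    refine bdd_integrable (hf.pow_const 2) (C := C ^ 2) fun ω => ?_
    rw [abs_pow]
    exact pow_le_pow_left₀ (abs_nonneg _) (hbd ω) 2
  have hI2 : 0 ≤ ∫ ω, f ω ^ 2 := integral_nonneg fun ω => sq_nonneg _
  have hM : ∫ ω in s, f ω = ∫ ω, f ω :=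
    setIntegral_eq_integral_of_forall_compl_eq_zero hzero
  by_cases hc : ℙ s = 0
  · have h0 : ∫ ω, f ω = 0 := by
      rw [← hM, Measure.restrict_eq_zero.2 hc, integral_zero_measure]
    simp [h0, hc]
  · have hc0 : 0 < (ℙ s).toReal := ENNReal.toReal_pos hc (measure_ne_top _ _)
    have hval := expand_sq (Measure.restrict ℙ s) hint.restrict hint2.restrict
      ((∫ ω, f ω) / (ℙ s).toReal)
    rw [hM, Measure.restrict_apply_univ] at hval
    have key : 0 ≤ ∫ ω in s, (f ω - (∫ ω, f ω) / (ℙ s).toReal) ^ 2 :=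
      integral_nonneg fun ω => sq_nonneg _
    rw [hval] at key
    have hsle : ∫ ω in s, f ω ^ 2 ≤ ∫ ω, f ω ^ 2 :=
      setIntegral_le_integral hint2 (Filter.Eventually.of_forall fun ω => sq_nonneg _)
    have hc' : (ℙ s).toReal ≠ 0 := hc0.ne'
    have hac : (∫ ω, f ω) / (ℙ s).toReal * (ℙ s).toReal = ∫ ω, f ω :=
      div_mul_cancel₀ _ hc'
    nlinarith [mul_le_mul_of_nonneg_right hsle hc0.le, sq_nonneg (∫ ω, f ω),
      mul_le_mul_of_nonneg_right key hc0.le]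

/-- **Beyond negative covariance.** For Bernoulli(`p i`) random variables `X i` with no
independence assumption, with `η i j = (E[X i * X j] - p i * p j)₊` for `i ≠ j`, `η i i = 0`,
`H = ∑_{i,j} η i j`, `S = ∑ i, p i` and `B = S + S²` (with `B + H > 0`, i.e. not all `p i`
are zero), and mutually independent Bernoulli(`p i`) random variables `Xt i`, one has
`P(Z > 0) ≥ (1/2) · (1 - H/(B + H)) · P(Z̃ > 0)`. -/
theorem stmt_6
    {Ω : Type*} [MeasureSpace Ω] [IsProbabilityMeasure (ℙ : Measure Ω)]
    (n : ℕ) (X Xt : Fin n → Ω → ℝ) (p : Fin n → ℝ)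
    (hX01 : ∀ i ω, X i ω = 0 ∨ X i ω = 1)
    (hXt01 : ∀ i ω, Xt i ω = 0 ∨ Xt i ω = 1)
    (hXmeas : ∀ i, Measurable (X i))
    (hXtmeas : ∀ i, Measurable (Xt i))
    (hp : ∀ i, p i ∈ Set.Icc (0 : ℝ) 1)
    (hXp : ∀ i, (ℙ {ω | X i ω = 1}).toReal = p i)
    (hXtp : ∀ i, (ℙ {ω | Xt i ω = 1}).toReal = p i)
    (hindep : iIndepFun Xt ℙ)
    (η : Fin n → Fin n → ℝ)
    (hη : ∀ i j, η i j =
      if i = j then 0 else max ((∫ ω, X i ω * X j ω) - p i * p j) 0)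
    (S B H : ℝ)
    (hS : S = ∑ i, p i) (hB : B = S + S ^ 2) (hH : H = ∑ i, ∑ j, η i j)
    (hBH : 0 < B + H) :
    (ℙ {ω | 0 < ∑ i, X i ω}).toReal ≥
      (1 / 2) * (1 - H / (B + H)) * (ℙ {ω | 0 < ∑ i, Xt i ω}).toReal := by
  -- basic bounds
  have hp0 : ∀ i, 0 ≤ p i := fun i => (hp i).1
  have hS0 : 0 ≤ S := hS ▸ Finset.sum_nonneg fun i _ => hp0 i
  have hη0 : ∀ i j, 0 ≤ η i j := by
    intro i j; rw [hη]; split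
    · exact le_refl 0
    · exact le_max_right _ _
  have hH0 : 0 ≤ H := hH ▸ Finset.sum_nonneg fun i _ => Finset.sum_nonneg fun j _ => hη0 i j
  have hB0 : 0 ≤ B := by rw [hB]; nlinarith [sq_nonneg S]
  have hX01' : ∀ i ω, 0 ≤ X i ω ∧ X i ω ≤ 1 := by
    intro i ω; rcases hX01 i ω with h | h <;> rw [h] <;> norm_num
  have hXbd : ∀ i ω, |X i ω| ≤ 1 := fun i ω =>
    abs_le.2 ⟨by linarith [(hX01' i ω).1], (hX01' i ω).2⟩
  -- Pt bounds
  set Pt := (ℙ {ω | 0 < ∑ i, Xt i ω}).toReal with hPtdef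
  have hPt0 : 0 ≤ Pt := ENNReal.toReal_nonneg
  have hPt1 : Pt ≤ 1 := by
    have h := prob_le_one (μ := (ℙ : Measure Ω)) (s := {ω | 0 < ∑ i, Xt i ω})
    simpa using ENNReal.toReal_mono ENNReal.one_ne_top h
  have hPtS : Pt ≤ S := by
    have hsub : {ω | 0 < ∑ i, Xt i ω} ⊆ ⋃ i, {ω | Xt i ω = 1} := by
      intro ω hω
      by_contra hcon
      simp only [Set.mem_iUnion, Set.mem_setOf_eq, not_exists] at hcon
      have hz : ∀ i, Xt i ω = 0 := fun i => (hXt01 i ω).resolve_right (hcon i)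
      have : ∑ i, Xt i ω = 0 := Finset.sum_eq_zero fun i _ => hz i
      exact absurd hω (by simp [Set.mem_setOf_eq, this])
    have hle : ℙ {ω | 0 < ∑ i, Xt i ω} ≤ ∑ i, ℙ {ω | Xt i ω = 1} :=
      (measure_mono hsub).trans (measure_iUnion_fintype_le _ _)
    have hne : (∑ i, ℙ {ω | Xt i ω = 1}) ≠ ⊤ :=
      (ENNReal.sum_lt_top.2 fun i _ => measure_lt_top _ _).ne
    calc Pt ≤ (∑ i, ℙ {ω | Xt i ω = 1}).toReal := ENNReal.toReal_mono hne hle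
      _ = ∑ i, (ℙ {ω | Xt i ω = 1}).toReal := ENNReal.toReal_sum fun i _ => measure_ne_top _ _
      _ = S := by rw [hS]; exact Finset.sum_congr rfl fun i _ => hXtp i
  -- expectations
  have hintX : ∀ i, Integrable (X i) ℙ := fun i => bdd_integrable (hXmeas i) (hXbd i)
  have hEXi : ∀ i, ∫ ω, X i ω = p i := by
    intro i
    have hA : MeasurableSet {ω | X i ω = 1} := hXmeas i (measurableSet_singleton 1)
    have hrepr : X i = Set.indicator {ω | X i ω = 1} (fun _ => (1 : ℝ)) := by
      funext ω
      rcases hX01 i ω with h | h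
      · rw [Set.indicator_of_notMem (by simp [Set.mem_setOf_eq, h]), h]
      · rw [Set.indicator_of_mem (by simp [Set.mem_setOf_eq, h]), h]
    rw [show (fun ω => X i ω) = X i from rfl, hrepr, integral_indicator_const _ hA,
      smul_eq_mul, mul_one, measureReal_def, hXp i]
  have hZmeas : Measurable fun ω => ∑ i, X i ω :=
    Finset.measurable_sum _ fun i _ => hXmeas i
  have hZ0 : ∀ ω, 0 ≤ ∑ i, X i ω := fun ω =>
    Finset.sum_nonneg fun i _ => (hX01' i ω).1
  have hZbd : ∀ ω, |∑ i, X i ω| ≤ (n : ℝ) := by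
    intro ω
    rw [abs_of_nonneg (hZ0 ω)]
    calc ∑ i, X i ω ≤ ∑ _i : Fin n, (1 : ℝ) :=
      Finset.sum_le_sum fun i _ => (hX01' i ω).2
      _ = n := by simp
  have hEZ : ∫ ω, ∑ i, X i ω = S := by
    rw [integral_finset_sum _ fun i _ => hintX i, hS]
    exact Finset.sum_congr rfl fun i _ => hEXi i
  -- second moment
  have hintXX : ∀ i j, Integrable (fun ω => X i ω * X j ω) ℙ := by
    intro i j
    refine bdd_integrable ((hXmeas i).mul (hXmeas j)) (C := 1) fun ω => ?_
    rw [abs_mul]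
    calc |X i ω| * |X j ω| ≤ 1 * 1 := mul_le_mul (hXbd i ω) (hXbd j ω) (abs_nonneg _) zero_le_one
      _ = 1 := by ring
  have hEZ2 : ∫ ω, (∑ i, X i ω) ^ 2 = ∑ i, ∑ j, ∫ ω, X i ω * X j ω := by
    have hpt : ∀ ω, (∑ i, X i ω) ^ 2 = ∑ i, ∑ j, X i ω * X j ω := fun ω => by
      rw [sq, Finset.sum_mul_sum]
    simp_rw [hpt]
    rw [integral_finset_sum _ fun i _ => integrable_finset_sum _ fun j _ => hintXX i j]
    exact Finset.sum_congr rfl fun i _ => integral_finset_sum _ fun j _ => hintXX i j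
  have hterm : ∀ i j, ∫ ω, X i ω * X j ω
      ≤ p i * p j + η i j + (if i = j then p i - p i ^ 2 else 0) := by
    intro i j
    by_cases h : i = j
    · subst h
      have hsq : (fun ω => X i ω * X i ω) = fun ω => X i ω := by
        funext ω; rcases hX01 i ω with h | h <;> rw [h] <;> ring
      rw [hsq, hEXi, hη, if_pos rfl, if_pos rfl]
      ring_nf
      nlinarith [le_refl (p i)]
    · have hmax : (∫ ω, X i ω * X j ω) - p i * p j ≤ η i j := by
        rw [hη, if_neg h]; exact le_max_left _ _
      rw [if_neg h]
      linarith
  have hEZ2le : ∫ ω, (∑ i, X i ω) ^ 2 ≤ B + H := by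
    rw [hEZ2]
    have hdiag : ∑ i, ∑ j, (if i = j then p i - p i ^ 2 else (0:ℝ)) = ∑ i, (p i - p i ^ 2) := by
      refine Finset.sum_congr rfl fun i _ => ?_
      simp [Finset.sum_ite_eq]
    have hpp : ∑ i, ∑ j, p i * p j = S ^ 2 := by
      rw [hS, sq, Finset.sum_mul_sum]
    have hdle : ∑ i, (p i - p i ^ 2) ≤ S := by
      rw [hS]; exact Finset.sum_le_sum fun i _ => by nlinarith [sq_nonneg (p i)]
    calc ∑ i, ∑ j, ∫ ω, X i ω * X j ω
        ≤ ∑ i, ∑ j, (p i * p j + η i j + (if i = j then p i - p i ^ 2 else 0)) :=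
          Finset.sum_le_sum fun i _ => Finset.sum_le_sum fun j _ => hterm i j
      _ = (∑ i, ∑ j, p i * p j) + (∑ i, ∑ j, η i j)
            + ∑ i, ∑ j, (if i = j then p i - p i ^ 2 else (0:ℝ)) := by
          simp [Finset.sum_add_distrib]
      _ ≤ S ^ 2 + H + S := by rw [hpp, ← hH, hdiag]; linarith
      _ = B + H := by rw [hB]; ring
  -- Cauchy-Schwarz
  set PZ := (ℙ {ω | 0 < ∑ i, X i ω}).toReal with hPZdef
  have hPZ0 : 0 ≤ PZ := ENNReal.toReal_nonneg
  have hCS : S ^ 2 ≤ (B + H) * PZ := by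
    have hzero : ∀ ω ∉ {ω | 0 < ∑ i, X i ω}, ∑ i, X i ω = 0 := fun ω hω =>
      le_antisymm (not_lt.1 hω) (hZ0 ω)
    have := my_cs hZmeas hZbd hzero
    rw [hEZ] at this
    calc S ^ 2 ≤ (∫ ω, (∑ i, X i ω) ^ 2) * PZ := this
      _ ≤ (B + H) * PZ := mul_le_mul_of_nonneg_right hEZ2le hPZ0
  -- conclude
  have hkey : (1 / 2) * B * Pt ≤ S ^ 2 := by
    rw [hB]
    nlinarith [mul_le_mul_of_nonneg_left hPtS hS0,
      mul_le_mul_of_nonneg_left hPt1 (sq_nonneg S)]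
  have hcoef : 1 - H / (B + H) = B / (B + H) := by field_simp; ring
  rw [ge_iff_le, hcoef,
    show (1 / 2) * (B / (B + H)) * Pt = ((1 / 2) * B * Pt) / (B + H) by ring,
    div_le_iff₀ hBH]
  nlinarith [hkey, hCS]
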